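/- Let n ≥ 3 and 2 ≤ s ≤ n − 1. Let Q(x) = Σ_{0 ≤ i,j ≤ n} a_{ij} x_i x_j be a quadratic form on ℝ^{n+1} with a_{ij} = a_{ji}. Suppose there exist c ∈ ℝ^{n+1} with Σ_{i=0}^n c_i = s and r > 0 such that Q(v − c) = r for all v ∈ W(n+1,s) and Q(u − c) > r for all u ∈ V_{n,s} \ W(n+1,s). Then there exist α_0, …, α_n > 0 such that Q(x) = q_α(x) for every x ∈ ℝ^{n+1} with Σ_{i=0}^n x_i = 0; that is, every metric making J(n+1,s) a Delaunay polytope restricts on the hyperplane spanned by A_n to a form q_α with all α_i > 0. -/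

import Mathlib

open Finset

noncomputable section

/-- The point lattice `V_{n,s} = {x ∈ ℤ^{n+1} : Σ x_i = s}`. -/
def Vset (n s : ℕ) : Set (Fin (n+1) → ℝ) :=
  {x | (∀ i, ∃ m : ℤ, x i = m) ∧ ∑ i, x i = (s : ℝ)}

/-- The vertex set `W(n+1,s) = {x ∈ {0,1}^{n+1} : Σ x_i = s}`. -/
def Wset (n s : ℕ) : Set (Fin (n+1) → ℝ) :=
  {x | (∀ i, x i = 0 ∨ x i = 1) ∧ ∑ i, x i = (s : ℝ)}

/-- The quadratic form `q_α(x) = Σ α_i x_i²`. -/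
def qForm {n : ℕ} (α : Fin (n+1) → ℝ) (x : Fin (n+1) → ℝ) : ℝ :=
  ∑ i, α i * (x i) ^ 2

/-!
Moving a `1` of a vertex `v` of `J(n+1,s)` onto a `0` gives another vertex, so the Delaunay
equalities give `Q(e_i - e_j) = -polar Q (v - c) (e_i - e_j)` whenever `v_i = 0` and `v_j = 1`.
Choosing vertices with prescribed zeros and ones, `F i j = Q(e_i - e_j)` satisfies the four-point
relation `F i k + F j l = F i l + F j k`, which forces `F i j = α_i + α_j`. A quadratic form is
determined on the hyperplane `Σ x_i = 0` by its values at the `e_i - e_j`, so `Q = q_α` there.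
Finally, for `v_i = 0` and `v_j = v_k = 1`, the strict Delaunay inequality at the lattice point
`v + 2e_i - e_j - e_k` reads `2 α_i > 0`.
-/

namespace QuadraticMap

variable {ι R : Type*} [Fintype ι] [DecidableEq ι] [CommRing R]

theorem two_mul_eq_sum_polar_single (Q : QuadraticForm R (ι → R)) (x : ι → R) :
    2 * Q x = ∑ i, ∑ j, x i * x j * polar Q (Pi.single i 1) (Pi.single j 1) := by
  rw [two_mul, ← two_nsmul, ← polar_self, ← polarBilin_apply_apply,
    ← Matrix.toLinearMap₂'_toMatrix' (R := R) (polarBilin Q), Matrix.toLinearMap₂'_apply]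
  simp only [LinearMap.toMatrix₂'_apply, polarBilin_apply_apply, smul_eq_mul, mul_assoc]

theorem map_eq_zero_of_sum_eq_zero [NoZeroDivisors R] [NeZero (2 : R)]
    (Q : QuadraticForm R (ι → R))
    (hQ : ∀ i j, Q (Pi.single i 1 - Pi.single j 1) = 0) {x : ι → R} (hx : ∑ i, x i = 0) :
    Q x = 0 := by
  have hpolar (i j : ι) :
      polar Q (Pi.single i 1) (Pi.single j 1) = Q (Pi.single i 1) + Q (Pi.single j 1) := by
    have := polar_neg_right Q (Pi.single i (1 : R)) (Pi.single j 1)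
    rw [polar, ← sub_eq_add_neg, hQ, QuadraticMap.map_neg] at this
    linear_combination this
  have hzero (f : ι → R) : ∑ i, ∑ j, x i * x j * f i = 0 := by
    simp_rw [mul_right_comm (x _) (x _), ← mul_sum, hx, mul_zero, sum_const_zero]
  have h2 : 2 * Q x = 0 := by
    rw [two_mul_eq_sum_polar_single]
    simp_rw [hpolar, mul_add, sum_add_distrib, hzero, zero_add]
    rw [sum_comm]
    simp_rw [mul_comm (x _) (x _), hzero]
  simpa [two_ne_zero] using h2

theorem map_eq_sum_mul_sq_of_sum_eq_zero [NoZeroDivisors R] [NeZero (2 : R)]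
    (Q : QuadraticForm R (ι → R)) (α : ι → R)
    (hQ : ∀ i j, i ≠ j → Q (Pi.single i 1 - Pi.single j 1) = α i + α j) {x : ι → R}
    (hx : ∑ i, x i = 0) : Q x = ∑ i, α i * x i ^ 2 := by
  have hW (i j : ι) (hij : i ≠ j) :
      weightedSumSquares R α (Pi.single i 1 - Pi.single j 1) = α i + α j := by
    rw [weightedSumSquares_apply, Fintype.sum_eq_add i j hij]
    · simp [hij, hij.symm]
    · intro m hm; simp [hm.1, hm.2]
  have := map_eq_zero_of_sum_eq_zero (Q - weightedSumSquares R α) (fun i j => ?_) hx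
  · simp only [sub_apply, weightedSumSquares_apply, smul_eq_mul, sub_eq_zero] at this
    rw [this]
    exact sum_congr rfl fun i _ => by ring
  · obtain rfl | hij := eq_or_ne i j
    · simp
    · simp [hQ i j hij, hW i j hij]

end QuadraticMap

section Combinatorics

variable {ι : Type*} [Fintype ι]

theorem Fintype.exists_ne_ne_of_three_le_card (h : 3 ≤ Fintype.card ι) (i j : ι) :
    ∃ k, k ≠ i ∧ k ≠ j := by
  classical
  by_contra! hk
  have : (univ : Finset ι) ⊆ {i, j} := fun k _ => by
    by_cases hki : k = i
    · simp [hki]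
    · simp [hk k hki]
  have := (card_le_card this).trans (card_le_two (a := i) (b := j))
  rw [card_univ] at this
  omega

theorem exists_eq_add_of_add_eq_add {R : Type*} [Field R] [NeZero (2 : R)]
    (h : 3 ≤ Fintype.card ι) (F : ι → ι → R) (hsymm : ∀ i j, F i j = F j i)
    (hF : ∀ i j k l, i ≠ k → i ≠ l → j ≠ k → j ≠ l →
      F i k + F j l = F i l + F j k) :
    ∃ α : ι → R, ∀ i j, i ≠ j → F i j = α i + α j := by
  -- `G i j k` will be `2 * α i` for all distinct `j, k` different from `i`.
  set G : ι → ι → ι → R := fun i j k => F i j + F i k - F j k with hG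
  have hG_right (i j k k' : ι) (hki : k ≠ i) (hkj : k ≠ j) (hk'i : k' ≠ i)
      (hk'j : k' ≠ j) : G i j k = G i j k' := by
    have := hF i j k k' hki.symm hk'i.symm hkj.symm hk'j.symm
    simp only [hG]
    linear_combination this
  have hG_eq (i j k j' k' : ι) (hji : j ≠ i) (hki : k ≠ i) (hjk : j ≠ k) (hj'i : j' ≠ i)
      (hk'i : k' ≠ i) (hj'k' : j' ≠ k') : G i j k = G i j' k' := by
    obtain rfl | hjj' := eq_or_ne j j'
    · exact hG_right i j k k' hki hjk.symm hk'i hj'k'.symm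
    calc G i j k = G i j j' := hG_right i j k j' hki hjk.symm hj'i hjj'.symm
      _ = G i j' j := by simp only [hG, hsymm j j']; ring
      _ = G i j' k' := hG_right i j' j k' hji hjj' hk'i hj'k'.symm
  have hpair (i : ι) : ∃ p : ι × ι, p.1 ≠ i ∧ p.2 ≠ i ∧ p.1 ≠ p.2 := by
    obtain ⟨j, hji, -⟩ := Fintype.exists_ne_ne_of_three_le_card h i i
    obtain ⟨k, hki, hkj⟩ := Fintype.exists_ne_ne_of_three_le_card h i j
    exact ⟨(j, k), hji, hki, hkj.symm⟩
  choose p hp using hpair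
  refine ⟨fun i => G i (p i).1 (p i).2 / 2, fun i j hij => ?_⟩
  obtain ⟨k, hki, hkj⟩ := Fintype.exists_ne_ne_of_three_le_card h i j
  dsimp only
  rw [hG_eq i _ _ j k (hp i).1 (hp i).2.1 (hp i).2.2 hij.symm hki (Ne.symm hkj),
    hG_eq j _ _ i k (hp j).1 (hp j).2.1 (hp j).2.2 hij hkj (Ne.symm hki)]
  simp only [hG, hsymm j i, hsymm j k]
  field_simp
  ring

end Combinatorics

theorem Matrix.toQuadraticForm'_of_apply {ι R : Type*} [Fintype ι] [DecidableEq ι] [CommRing R]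
    (a : ι → ι → R) (x : ι → R) :
    (Matrix.of a).toQuadraticForm' x = ∑ i, ∑ j, a i j * x i * x j := by
  rw [Matrix.toQuadraticForm', LinearMap.BilinMap.toQuadraticMap_apply,
    Matrix.toLinearMap₂'_apply]
  exact sum_congr rfl fun i _ => sum_congr rfl fun j _ => by
    simp only [smul_eq_mul, Matrix.of_apply]; ring

section Delaunay

variable {n s : ℕ}

theorem Wset_subset_Vset : Wset n s ⊆ Vset n s := fun _ hv =>
  ⟨fun i => (hv.1 i).elim (fun h => ⟨0, by simp [h]⟩) (fun h => ⟨1, by simp [h]⟩), hv.2⟩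

theorem add_single_sub_single_mem_Vset {u : Fin (n+1) → ℝ} (hu : u ∈ Vset n s)
    (i j : Fin (n+1)) :
    u + (Pi.single i 1 - Pi.single j 1) ∈ Vset n s := by
  refine ⟨fun m => ?_, by simp [sum_add_distrib, hu.2]⟩
  obtain ⟨k, hk⟩ := hu.1 m
  refine ⟨k + (if m = i then 1 else 0) - (if m = j then 1 else 0), ?_⟩
  simp only [Pi.add_apply, Pi.sub_apply, Pi.single_apply, hk]
  push_cast
  split_ifs <;> ring

theorem add_single_sub_single_mem_Wset {v : Fin (n+1) → ℝ} (hv : v ∈ Wset n s)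
    {i j : Fin (n+1)} (hi : v i = 0) (hj : v j = 1) :
    v + (Pi.single i 1 - Pi.single j 1) ∈ Wset n s := by
  refine ⟨fun m => ?_, by simp [sum_add_distrib, hv.2]⟩
  by_cases hmi : m = i
  · subst hmi
    have hij : m ≠ j := by rintro rfl; simp [hi] at hj
    simp [hi, hij]
  by_cases hmj : m = j
  · subst hmj; simp [hj, hmi]
  · simpa [hmi, hmj] using hv.1 m

theorem exists_mem_Wset (P N : Finset (Fin (n+1))) (hPN : Disjoint P N) (hP : #P ≤ s)
    (hN : s + #N ≤ n + 1) :
    ∃ v ∈ Wset n s, (∀ i ∈ P, v i = 1) ∧ ∀ i ∈ N, v i = 0 := by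
  obtain ⟨T, hPT, hTN, hT⟩ := exists_subsuperset_card_eq (s := P) (t := Nᶜ) (n := s)
    (subset_compl_iff_disjoint_right.mpr hPN) hP (by rw [card_compl, Fintype.card_fin]; omega)
  refine ⟨fun m => if m ∈ T then 1 else 0, ⟨fun m => ?_, ?_⟩, fun i hi => ?_,
    fun i hi => ?_⟩
  · by_cases hm : m ∈ T <;> simp [hm]
  · simp [hT]
  · simp [hPT hi]
  · have : i ∉ T := fun h => mem_compl.mp (hTN h) hi
    simp [this]

variable {Q : QuadraticForm ℝ (Fin (n+1) → ℝ)} {c : Fin (n+1) → ℝ} {r : ℝ}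

theorem map_single_sub_single_add_polar_eq_zero (heq : ∀ v ∈ Wset n s, Q (v - c) = r)
    {v : Fin (n+1) → ℝ} (hv : v ∈ Wset n s) {i j : Fin (n+1)} (hi : v i = 0) (hj : v j = 1) :
    Q (Pi.single i 1 - Pi.single j 1) +
      QuadraticMap.polar Q (v - c) (Pi.single i 1 - Pi.single j 1) = 0 := by
  have h := heq _ (add_single_sub_single_mem_Wset hv hi hj)
  rw [add_sub_right_comm, ← sub_eq_zero, ← heq v hv] at h
  rw [QuadraticMap.polar]
  linear_combination h

theorem map_single_sub_single_add_eq_add (heq : ∀ v ∈ Wset n s, Q (v - c) = r) (hs : 2 ≤ s)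
    (hsn : s + 1 ≤ n) {i j k l : Fin (n+1)} (hik : i ≠ k) (hil : i ≠ l) (hjk : j ≠ k)
    (hjl : j ≠ l) :
    Q (Pi.single i 1 - Pi.single k 1) + Q (Pi.single j 1 - Pi.single l 1) =
      Q (Pi.single i 1 - Pi.single l 1) + Q (Pi.single j 1 - Pi.single k 1) := by
  obtain ⟨v, hv, hv1, hv0⟩ := exists_mem_Wset (s := s) {k, l} {i, j}
    (by simp [hik, hil, hjk, hjl]) (card_le_two.trans hs)
    (by have := card_le_two (a := i) (b := j); omega)
  have h (a b : Fin (n+1)) (ha : a ∈ ({i, j} : Finset _)) (hb : b ∈ ({k, l} : Finset _)) :=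
    map_single_sub_single_add_polar_eq_zero heq hv (hv0 a ha) (hv1 b hb)
  have eik := h i k (by simp) (by simp)
  have eil := h i l (by simp) (by simp)
  have ejk := h j k (by simp) (by simp)
  have ejl := h j l (by simp) (by simp)
  simp only [QuadraticMap.polar_sub_right] at eik eil ejk ejl
  linear_combination eik + ejl - eil - ejk

theorem map_sub_add_map_sub_sub_map_sub_pos (heq : ∀ v ∈ Wset n s, Q (v - c) = r)
    (hgt : ∀ u ∈ Vset n s \ Wset n s, r < Q (u - c)) (hs : 2 ≤ s) (hsn : s + 1 ≤ n)
    {i j k : Fin (n+1)} (hij : i ≠ j) (hik : i ≠ k) :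
    0 < Q (Pi.single i 1 - Pi.single j 1) + Q (Pi.single i 1 - Pi.single k 1)
      - Q (Pi.single j 1 - Pi.single k 1) := by
  obtain ⟨v, hv, hv1, hv0⟩ := exists_mem_Wset (s := s) {j, k} {i}
    (by simp [hij, hik]) (card_le_two.trans hs) (by rw [card_singleton]; omega)
  have e₁ := map_single_sub_single_add_polar_eq_zero heq hv (hv0 i (by simp)) (hv1 j (by simp))
  have e₂ := map_single_sub_single_add_polar_eq_zero heq hv (hv0 i (by simp)) (hv1 k (by simp))
  set d₁ : Fin (n+1) → ℝ := Pi.single i 1 - Pi.single j 1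
  set d₂ : Fin (n+1) → ℝ := Pi.single i 1 - Pi.single k 1
  have hu : v + d₁ + d₂ ∈ Vset n s \ Wset n s := by
    refine ⟨add_single_sub_single_mem_Vset
      (add_single_sub_single_mem_Vset (Wset_subset_Vset hv) i j) i k, fun hu => ?_⟩
    have hui : (v + d₁ + d₂) i = 2 := by
      simp [d₁, d₂, hv0 i (mem_singleton_self i), hij, hik, one_add_one_eq_two]
    rcases hu.1 i with h | h <;> rw [hui] at h <;> norm_num at h
  have hQu : Q (v + d₁ + d₂ - c) =
      Q (v - c) + Q (d₁ + d₂) + QuadraticMap.polar Q (v - c) (d₁ + d₂) := by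
    rw [QuadraticMap.polar, add_assoc, add_sub_right_comm]; ring
  have hparallelogram :
      Q (d₁ + d₂) + Q (Pi.single j 1 - Pi.single k 1) = 2 * Q d₁ + 2 * Q d₂ := by
    have := QuadraticMap.polar_neg_right Q d₁ d₂
    rw [QuadraticMap.polar, QuadraticMap.polar, ← sub_eq_add_neg, QuadraticMap.map_neg,
      QuadraticMap.map_sub] at this
    have hd : d₂ - d₁ = Pi.single j 1 - Pi.single k 1 := by simp only [d₁, d₂]; abel
    rw [hd] at this
    linear_combination this
  have h := hgt _ hu
  rw [hQu, heq v hv, QuadraticMap.polar_add_right] at h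
  linarith

end Delaunay

theorem delaunay_metric_is_qAlpha (n : ℕ) (s : ℕ) (hs : 2 ≤ s)
    (hsn : s + 1 ≤ n)
    (a : Fin (n+1) → Fin (n+1) → ℝ)
    (Q : (Fin (n+1) → ℝ) → ℝ) (hQ : ∀ x, Q x = ∑ i, ∑ j, a i j * x i * x j)
    (c : Fin (n+1) → ℝ) (r : ℝ)
    (heq : ∀ v ∈ Wset n s, Q (v - c) = r)
    (hgt : ∀ u ∈ Vset n s \ Wset n s, r < Q (u - c)) :
    ∃ α : Fin (n+1) → ℝ, (∀ i, 0 < α i) ∧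
      ∀ x : Fin (n+1) → ℝ, ∑ i, x i = 0 → Q x = qForm α x := by
  obtain ⟨Q, rfl⟩ : ∃ Q' : QuadraticForm ℝ (Fin (n+1) → ℝ), Q = ⇑Q' :=
    ⟨(Matrix.of a).toQuadraticForm',
      funext fun x => (hQ x).trans (Matrix.toQuadraticForm'_of_apply a x).symm⟩
  have hcard : 3 ≤ Fintype.card (Fin (n+1)) := by simp only [Fintype.card_fin]; omega
  obtain ⟨α, hα⟩ : ∃ α : Fin (n+1) → ℝ,
      ∀ i j, i ≠ j → Q (Pi.single i 1 - Pi.single j 1) = α i + α j :=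
    exists_eq_add_of_add_eq_add hcard _ (fun i j => QuadraticMap.map_sub _ _ _)
      fun i j k l => map_single_sub_single_add_eq_add heq hs hsn
  refine ⟨α, fun i => ?_, fun x hx =>
    QuadraticMap.map_eq_sum_mul_sq_of_sum_eq_zero Q α hα hx⟩
  obtain ⟨j, hji, -⟩ := Fintype.exists_ne_ne_of_three_le_card hcard i i
  obtain ⟨k, hki, hkj⟩ := Fintype.exists_ne_ne_of_three_le_card hcard i j
  have := map_sub_add_map_sub_sub_map_sub_pos heq hgt hs hsn hji.symm hki.symm
  rw [hα i j hji.symm, hα i k hki.symm, hα j k hkj.symm] at this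
  linarith
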